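/- Let q ≥ 3 be an integer, let s, t ∈ ℂ with s ≠ 0, and let f = (x² + y³)² + s·x²·y^{q+3} + t·x²·y^{q+4} ∈ ℂ[x,y]. Then there exist polynomials α_i, β_i, u_i ∈ ℂ[x,y] (i = 1, 2, 3) with u_i(0,0) ≠ 0 such that: u₁·y^{q+8} = α₁·(∂f/∂x) + β₁·(∂f/∂y); u₂·x·y^{q+6} = α₂·(∂f/∂x) + β₂·(∂f/∂y); and u₃·x^{q+4} = α₃·(∂f/∂x) + β₃·(∂f/∂y). In particular, y^{q+8}, x·y^{q+6} and x^{q+4} belong to the Jacobian ideal of f in the local ring ℂ[x,y] localized at the maximal ideal (x,y). -/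

import Mathlib

/-!
Write `f_x = 4x³ + x y³ v` and `f_y = 6y⁵ + x²y²(6 + y^q h)`, where `v(0) = 4` and
`h(0) = (q + 3) s`. Eliminating `x³` between them gives `U · x y^{q+5} ∈ Jac(f)` with
`U(0) = (4q + 24) s ≠ 0`. In the local ring at the origin, where `U`, `4` and `6` are units,
`y^{q+8}` then follows from `6y⁵ ≡ -x²y²(6 + y^q h)` modulo `f_y`, and `x^{q+4}` from
`4x³ ≡ -x y³ v` modulo `f_x`: this trades `y³` for `x²`, so `x y^{3n} ∈ Jac(f)` implies
`x^{2n+1} ∈ Jac(f)`, and `n = ⌊(q + 3)/2⌋` satisfies `q + 5 ≤ 3n` and `2n + 1 ≤ q + 4`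
as soon as `q ≥ 3`. Below, `v`, `h` and `U` are `cofactorX`, `cofactorY` and `unitXY`.
-/

open MvPolynomial

/-- The polynomial `f = (x² + y³)² + s x² y^{q+3} + t x² y^{q+4}` (family `W^#_{1,2q}`),
with `x = X 0`, `y = X 1`. -/
noncomputable def fWsharpEven (q : ℕ) (s t : ℂ) : MvPolynomial (Fin 2) ℂ :=
  (X 0 ^ 2 + X 1 ^ 3) ^ 2 + C s * X 0 ^ 2 * X 1 ^ (q + 3) + C t * X 0 ^ 2 * X 1 ^ (q + 4)

namespace MvPolynomial

variable {σ K : Type*} [Field K]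

instance isPrime_ker_constantCoeff :
    (RingHom.ker (constantCoeff : MvPolynomial σ K →+* K)).IsPrime :=
  RingHom.ker_isPrime _

noncomputable def localClosureAtOrigin (I : Ideal (MvPolynomial σ K)) :
    Ideal (MvPolynomial σ K) :=
  (I.map (algebraMap _
    (Localization.AtPrime (RingHom.ker (constantCoeff : MvPolynomial σ K →+* K))))).comap
      (algebraMap _ _)

variable {I : Ideal (MvPolynomial σ K)} {p u : MvPolynomial σ K}

theorem le_localClosureAtOrigin : I ≤ localClosureAtOrigin I :=
  Ideal.le_comap_map

theorem mem_localClosureAtOrigin_iff :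
    p ∈ localClosureAtOrigin I ↔ ∃ u, constantCoeff u ≠ 0 ∧ u * p ∈ I := by
  rw [localClosureAtOrigin, Ideal.mem_comap, IsLocalization.algebraMap_mem_map_algebraMap_iff
    (RingHom.ker constantCoeff).primeCompl]
  simp [Ideal.primeCompl]

theorem mem_localClosureAtOrigin_of_mul (hu : constantCoeff u ≠ 0)
    (h : u * p ∈ localClosureAtOrigin I) : p ∈ localClosureAtOrigin I := by
  rw [localClosureAtOrigin, Ideal.mem_comap, map_mul] at h
  rw [localClosureAtOrigin, Ideal.mem_comap]
  exact (Ideal.unit_mul_mem_iff_mem _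
    (IsLocalization.map_units _ (⟨u, hu⟩ : (RingHom.ker constantCoeff).primeCompl))).mp h

theorem exists_of_mem_localClosureAtOrigin_span_pair {a b : MvPolynomial σ K}
    (h : p ∈ localClosureAtOrigin (Ideal.span {a, b})) :
    ∃ α β u : MvPolynomial σ K, coeff 0 u ≠ 0 ∧ u * p = α * a + β * b := by
  obtain ⟨u, hu, hup⟩ := mem_localClosureAtOrigin_iff.mp h
  obtain ⟨α, β, hαβ⟩ := Ideal.mem_span_pair.mp hup
  exact ⟨α, β, u, by rwa [← constantCoeff_eq], hαβ.symm⟩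

end MvPolynomial

namespace WsharpEven

section Identities

variable (q : ℕ) (s t : ℂ)

noncomputable def cofactorX : MvPolynomial (Fin 2) ℂ :=
  4 + 2 * C s * X 1 ^ q + 2 * C t * X 1 ^ (q + 1)

noncomputable def cofactorY : MvPolynomial (Fin 2) ℂ :=
  C ((q + 3) * s) + C ((q + 4) * t) * X 1

noncomputable def unitXY : MvPolynomial (Fin 2) ℂ :=
  cofactorY q s t * cofactorX q s t + 12 * (C s + C t * X 1)

theorem pderiv_zero_fWsharpEven :
    pderiv 0 (fWsharpEven q s t) = 4 * X 0 ^ 3 + X 0 * X 1 ^ 3 * cofactorX q s t := by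
  simp only [fWsharpEven, cofactorX, map_add, Derivation.leibniz, Derivation.leibniz_pow,
    pderiv_X_self, pderiv_X_of_ne one_ne_zero, derivation_C, smul_eq_mul, nsmul_eq_mul,
    Nat.reduceSubDiff]
  ring

theorem pderiv_one_fWsharpEven :
    pderiv 1 (fWsharpEven q s t) =
      6 * X 1 ^ 5 + X 0 ^ 2 * X 1 ^ 2 * (6 + X 1 ^ q * cofactorY q s t) := by
  simp only [fWsharpEven, cofactorY, map_add, Derivation.leibniz, Derivation.leibniz_pow,
    pderiv_X_self, pderiv_X_of_ne zero_ne_one, derivation_C, smul_eq_mul, nsmul_eq_mul,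
    Nat.reduceSubDiff, Nat.cast_add, Nat.cast_ofNat, C_mul, map_natCast, map_ofNat]
  ring

/-- The `x³`-terms cancel, and the `x y⁵`-terms leave `6 x y⁵ (cofactorX - 4)`, which is
divisible by `y^q`. -/
theorem unitXY_mul_eq :
    unitXY q s t * (X 0 * X 1 ^ (q + 5)) =
      (cofactorY q s t * X 1 ^ (q + 2) + 6 * X 1 ^ 2) * pderiv 0 (fWsharpEven q s t)
        - 4 * X 0 * pderiv 1 (fWsharpEven q s t) := by
  rw [pderiv_zero_fWsharpEven, pderiv_one_fWsharpEven, unitXY, cofactorX]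
  ring

theorem constantCoeff_unitXY (hq : q ≠ 0) :
    constantCoeff (unitXY q s t) = (4 * q + 24) * s := by
  simp only [unitXY, cofactorX, cofactorY, map_add, map_mul, map_pow, map_ofNat,
    constantCoeff_C, constantCoeff_X, zero_pow hq]
  ring

end Identities

noncomputable def jacobianAtOrigin (q : ℕ) (s t : ℂ) : Ideal (MvPolynomial (Fin 2) ℂ) :=
  localClosureAtOrigin
    (Ideal.span {pderiv 0 (fWsharpEven q s t), pderiv 1 (fWsharpEven q s t)})

section Membership

variable {q : ℕ} {s t : ℂ}

theorem pderiv_zero_mem_jacobianAtOrigin :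
    pderiv 0 (fWsharpEven q s t) ∈ jacobianAtOrigin q s t :=
  le_localClosureAtOrigin (Ideal.subset_span (by simp))

theorem pderiv_one_mem_jacobianAtOrigin :
    pderiv 1 (fWsharpEven q s t) ∈ jacobianAtOrigin q s t :=
  le_localClosureAtOrigin (Ideal.subset_span (by simp))

theorem X_zero_mul_X_one_pow_add_five_mem (hq : q ≠ 0) (hs : s ≠ 0) :
    X 0 * X 1 ^ (q + 5) ∈ jacobianAtOrigin q s t := by
  have hU : constantCoeff (unitXY q s t) ≠ 0 := by
    rw [constantCoeff_unitXY q s t hq]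
    exact mul_ne_zero (by norm_cast) hs
  refine mem_localClosureAtOrigin_of_mul hU (?_ : _ ∈ jacobianAtOrigin q s t)
  rw [unitXY_mul_eq]
  exact sub_mem (Ideal.mul_mem_left _ _ pderiv_zero_mem_jacobianAtOrigin)
    (Ideal.mul_mem_left _ _ pderiv_one_mem_jacobianAtOrigin)

theorem X_zero_mul_X_one_pow_add_six_mem (hq : q ≠ 0) (hs : s ≠ 0) :
    X 0 * X 1 ^ (q + 6) ∈ jacobianAtOrigin q s t := by
  convert Ideal.mul_mem_left _ (X 1) (X_zero_mul_X_one_pow_add_five_mem (t := t) hq hs) using 1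
  ring

theorem X_one_pow_add_eight_mem (hq : q ≠ 0) (hs : s ≠ 0) :
    X 1 ^ (q + 8) ∈ jacobianAtOrigin q s t := by
  have h6 : (6 : MvPolynomial (Fin 2) ℂ) * X 1 ^ (q + 8) =
      X 1 ^ (q + 3) * pderiv 1 (fWsharpEven q s t)
        - X 0 * (6 + X 1 ^ q * cofactorY q s t) * (X 0 * X 1 ^ (q + 5)) := by
    rw [pderiv_one_fWsharpEven]
    ring
  refine mem_localClosureAtOrigin_of_mul (u := 6) (by simp [map_ofNat])
    (?_ : _ ∈ jacobianAtOrigin q s t)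
  rw [h6]
  exact sub_mem (Ideal.mul_mem_left _ _ pderiv_one_mem_jacobianAtOrigin)
    (Ideal.mul_mem_left _ _ (X_zero_mul_X_one_pow_add_five_mem hq hs))

theorem X_zero_pow_mul_mem_of_mem {a b : ℕ}
    (h : X 0 ^ (a + 1) * X 1 ^ (b + 3) ∈ jacobianAtOrigin q s t) :
    X 0 ^ (a + 3) * X 1 ^ b ∈ jacobianAtOrigin q s t := by
  have h4 : (4 : MvPolynomial (Fin 2) ℂ) * (X 0 ^ (a + 3) * X 1 ^ b) =
      X 0 ^ a * X 1 ^ b * pderiv 0 (fWsharpEven q s t)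
        - cofactorX q s t * (X 0 ^ (a + 1) * X 1 ^ (b + 3)) := by
    rw [pderiv_zero_fWsharpEven]
    ring
  refine mem_localClosureAtOrigin_of_mul (u := 4) (by simp [map_ofNat])
    (?_ : _ ∈ jacobianAtOrigin q s t)
  rw [h4]
  exact sub_mem (Ideal.mul_mem_left _ _ pderiv_zero_mem_jacobianAtOrigin)
    (Ideal.mul_mem_left _ _ h)

theorem X_zero_pow_mul_mem_of_X_zero_mul_mem (n b : ℕ)
    (h : X 0 * X 1 ^ (3 * n + b) ∈ jacobianAtOrigin q s t) :
    X 0 ^ (2 * n + 1) * X 1 ^ b ∈ jacobianAtOrigin q s t := by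
  induction n generalizing b with
  | zero => simpa using h
  | succ n ih =>
    refine X_zero_pow_mul_mem_of_mem (ih (b + 3) ?_)
    rwa [show 3 * n + (b + 3) = 3 * (n + 1) + b by ring]

theorem X_zero_pow_add_four_mem (hq : 3 ≤ q) (hs : s ≠ 0) :
    X 0 ^ (q + 4) ∈ jacobianAtOrigin q s t := by
  obtain ⟨n, hn₁, hn₂⟩ : ∃ n, q + 5 ≤ 3 * n ∧ 2 * n + 1 ≤ q + 4 :=
    ⟨(q + 3) / 2, by omega, by omega⟩
  have hy : X 0 * X 1 ^ (3 * n + 0) ∈ jacobianAtOrigin q s t := by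
    rw [add_zero, ← Nat.sub_add_cancel hn₁, pow_add, mul_left_comm]
    exact Ideal.mul_mem_left _ _ (X_zero_mul_X_one_pow_add_five_mem (by omega) hs)
  have hx : X 0 ^ (2 * n + 1) ∈ jacobianAtOrigin q s t := by
    simpa using X_zero_pow_mul_mem_of_X_zero_mul_mem n 0 hy
  rw [← Nat.sub_add_cancel hn₂, pow_add]
  exact Ideal.mul_mem_left _ _ hx

end Membership

end WsharpEven

/-- For `f = (x² + y³)² + s x² y^{q+3} + t x² y^{q+4}` with `q ≥ 3` and `s ≠ 0`, there
are units `u₁, u₂, u₃` (polynomials with nonzero constant term) and polynomials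
`αᵢ, βᵢ` with `u₁·y^{q+8} = α₁·f_x + β₁·f_y`, `u₂·x y^{q+6} = α₂·f_x + β₂·f_y` and
`u₃·x^{q+4} = α₃·f_x + β₃·f_y`; in particular `y^{q+8}`, `x y^{q+6}` and `x^{q+4}` lie
in the Jacobian ideal of `f` in the local ring at `0`. -/
theorem powers_in_jacobian_WsharpEven (q : ℕ) (hq : 3 ≤ q) (s t : ℂ) (hs : s ≠ 0) :
    (∃ α₁ β₁ u₁ : MvPolynomial (Fin 2) ℂ, MvPolynomial.coeff 0 u₁ ≠ 0 ∧
      u₁ * X 1 ^ (q + 8) =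
        α₁ * pderiv 0 (fWsharpEven q s t) + β₁ * pderiv 1 (fWsharpEven q s t)) ∧
    (∃ α₂ β₂ u₂ : MvPolynomial (Fin 2) ℂ, MvPolynomial.coeff 0 u₂ ≠ 0 ∧
      u₂ * (X 0 * X 1 ^ (q + 6)) =
        α₂ * pderiv 0 (fWsharpEven q s t) + β₂ * pderiv 1 (fWsharpEven q s t)) ∧
    (∃ α₃ β₃ u₃ : MvPolynomial (Fin 2) ℂ, MvPolynomial.coeff 0 u₃ ≠ 0 ∧
      u₃ * X 0 ^ (q + 4) =
        α₃ * pderiv 0 (fWsharpEven q s t) + β₃ * pderiv 1 (fWsharpEven q s t)) := by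
  have hq₀ : q ≠ 0 := by omega
  exact ⟨exists_of_mem_localClosureAtOrigin_span_pair
      (WsharpEven.X_one_pow_add_eight_mem hq₀ hs),
    exists_of_mem_localClosureAtOrigin_span_pair
      (WsharpEven.X_zero_mul_X_one_pow_add_six_mem hq₀ hs),
    exists_of_mem_localClosureAtOrigin_span_pair (WsharpEven.X_zero_pow_add_four_mem hq hs)⟩
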